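/- Assume the standing hypotheses with $C_{\phi,w}$ densely defined and $\alpha\in(0,1]$. Then $\Delta_\alpha(C_{\phi,w}) = C_{\phi,w_\alpha}$ (equivalently, $\Delta_\alpha(C_{\phi,w})$ is closed) if and only if there exists $c\in(0,\infty)$ such that $\mathsf{h}_{\phi,w}^{1-\alpha} \le c\big(1+\mathsf{E}_{\phi,w}(\mathsf{h}_{\phi,w}^\alpha)\circ\phi^{-1}\cdot\mathsf{h}_{\phi,w}^{1-\alpha}\big)$ a.e. $[\mu]$. -/

import Mathlib

open MeasureTheory ENNReal NNReal Filter Topology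

variable {X : Type*} [MeasurableSpace X]

/-- The measure `μ_w` with density `|w|²` with respect to `μ`. -/
noncomputable def wcMeasure (μ : Measure X) (w : X → ℂ) : Measure X :=
  μ.withDensity fun x => (‖w x‖₊ : ℝ≥0∞) ^ 2

/-- The Radon–Nikodym derivative `h_{φ,w} = d(μ_w ∘ φ⁻¹)/dμ`. -/
noncomputable def wcDeriv (μ : Measure X) (w : X → ℂ) (φ : X → X) : X → ℝ≥0∞ :=
  ((wcMeasure μ w).map φ).rnDeriv μ

/-- The modified weight `w_α = w · (h_{φ,w}/(h_{φ,w}∘φ))^{α/2}` (interpreted a.e.). -/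
noncomputable def wcAlpha (μ : Measure X) (w : X → ℂ) (φ : X → X) (α : ℝ) : X → ℂ :=
  fun x => w x * (((wcDeriv μ w φ x / wcDeriv μ w φ (φ x)) ^ (α / 2)).toReal : ℂ)

/-- `E` is (a version of) the conditional expectation of the nonnegative function `f`
with respect to the σ-algebra `φ⁻¹(𝒜)` and the measure `ν`. -/
def IsCondExp (φ : X → X) (ν : Measure X) (f E : X → ℝ≥0∞) : Prop :=
  Measurable[MeasurableSpace.comap φ inferInstance] E ∧
    ∀ s : Set X, MeasurableSet s → ∫⁻ x in φ ⁻¹' s, E x ∂ν = ∫⁻ x in φ ⁻¹' s, f x ∂ν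

/-- `g = E ∘ φ⁻¹`: the measurable function with `g ∘ φ = E` a.e. `[ν]`,
vanishing a.e. `[μ]` on the set where `h = 0`. -/
def IsQuot (φ : X → X) (μ ν : Measure X) (h : X → ℝ≥0∞) (E g : X → ℝ≥0∞) : Prop :=
  Measurable g ∧ (∀ᵐ x ∂ν, g (φ x) = E x) ∧ (∀ᵐ x ∂μ, h x = 0 → g x = 0)

/-- `E` is (a version of) the conditional expectation of the complex function `f`
with respect to the σ-algebra `φ⁻¹(𝒜)` and the measure `ν`. -/
def IsCondExpC (φ : X → X) (ν : Measure X) (f E : X → ℂ) : Prop :=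
  Measurable[MeasurableSpace.comap φ inferInstance] E ∧
    ∀ s : Set X, MeasurableSet s → ν (φ ⁻¹' s) < ⊤ →
      ∫ x in φ ⁻¹' s, E x ∂ν = ∫ x in φ ⁻¹' s, f x ∂ν

/-- `f_w = χ_{{w ≠ 0}} f / w`. -/
noncomputable def fw (w f : X → ℂ) : X → ℂ := fun x => if w x = 0 then 0 else f x / w x

/-- The weight `w̃ = w/(h_{φ,w}∘φ)^{1/2}` of the partial isometry in the polar
decomposition `C_{φ,w} = U |C_{φ,w}|`, `U = C_{φ,w̃}`. -/
noncomputable def wcTilde (μ : Measure X) (w : X → ℂ) (φ : X → X) : X → ℂ :=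
  fun x => w x * (((wcDeriv μ w φ (φ x)) ^ (-(1 / 2) : ℝ)).toReal : ℂ)

/-- The function `Δ_α(C_{φ,w}) f = |C_{φ,w}|^α U |C_{φ,w}|^{1-α} f`, computed via
`|C_{φ,w}| = M_{h^{1/2}}` and `U = C_{φ,w̃}`. -/
noncomputable def aluthgeFun (μ : Measure X) (w : X → ℂ) (φ : X → X) (α : ℝ) (f : X → ℂ) :
    X → ℂ :=
  fun x => ((wcDeriv μ w φ x ^ (α / 2)).toReal : ℂ) *
    (wcTilde μ w φ x * (((wcDeriv μ w φ (φ x)) ^ ((1 - α) / 2)).toReal : ℂ) * f (φ x))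

/-- Membership in the domain of the Aluthge transform
`Δ_α(C_{φ,w}) = |C_{φ,w}|^α U |C_{φ,w}|^{1-α}`. -/
noncomputable def aluthgeDom (μ : Measure X) (w : X → ℂ) (φ : X → X) (α : ℝ) (f : X → ℂ) :
    Prop :=
  MemLp f 2 μ ∧
  MemLp (fun x => ((wcDeriv μ w φ x ^ ((1 - α) / 2)).toReal : ℂ) * f x) 2 μ ∧
  MemLp (fun x =>
    wcTilde μ w φ x * (((wcDeriv μ w φ (φ x)) ^ ((1 - α) / 2)).toReal : ℂ) * f (φ x)) 2 μ ∧
  MemLp (aluthgeFun μ w φ α f) 2 μ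

/-! Write `h = h_{φ,w}` and `g = E_{φ,w}(h^α) ∘ φ⁻¹`. Pointwise,
`h^{α/2} · (h∘φ)^{-1/2} · (h∘φ)^{(1-α)/2} = (h/h∘φ)^{α/2}`, so `Δ_α(C_{φ,w}) f` and
`C_{φ,w_α} f` are the same function. The change of variables `∫ |w|² G∘φ dμ = ∫ G h dμ` and the
pull-out property of `E_{φ,w}` give `‖C_{φ,w_α} f‖² = ∫ g h^{1-α} |f|² dμ`, while the middle
factor `U |C_{φ,w}|^{1-α} f` of the Aluthge transform is controlled by `|C_{φ,w}|^{1-α} f`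
because `U` is a contraction. Hence the two domains agree iff
`L²((1 + g h^{1-α}) μ) ⊆ L²(h^{1-α} μ)`. Such an inclusion of weighted spaces holds iff
`h^{1-α} ≤ c (1 + g h^{1-α})` a.e.: otherwise each set `{h^{1-α} > 2ⁿ (1 + g h^{1-α})}` has a
subset `Bₙ` of positive measure on which `h^{1-α}` is integrable, and `∑ₙ 𝟙_{Bₙ} / ∫_{Bₙ} h^{1-α}`
lies in the first space but not in the second. -/

theorem Complex.enorm_ofReal (r : ℝ) : ‖(r : ℂ)‖ₑ = ‖r‖ₑ := by
  rw [← enorm_norm, Complex.norm_real, enorm_norm]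

section WeightedInclusion

variable {μ : Measure X}

theorem memLp_two_iff_lintegral_enorm_sq_lt_top {E : Type*}
    [NormedAddCommGroup E] {f : X → E} (hf : AEStronglyMeasurable f μ) :
    MemLp f 2 μ ↔ ∫⁻ x, ‖f x‖ₑ ^ 2 ∂μ < ∞ := by
  rw [MemLp, eLpNorm_lt_top_iff_lintegral_rpow_enorm_lt_top two_ne_zero ofNat_ne_top]
  simp [hf]

theorem enorm_toReal_rpow_half_sq {t : ℝ≥0∞} {β : ℝ} (ht : t ^ (β / 2) ≠ ∞) :
    ‖(((t ^ (β / 2)).toReal : ℝ) : ℂ)‖ₑ ^ 2 = t ^ β := by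
  rw [Complex.enorm_ofReal, Real.enorm_toReal ht, ← ENNReal.rpow_natCast, ← ENNReal.rpow_mul]
  norm_num

theorem lintegral_enorm_toReal_rpow_half_mul_sq {t : X → ℝ≥0∞}
    (ht : ∀ᵐ x ∂μ, t x ≠ ∞) {β : ℝ} (hβ : 0 ≤ β) (f : X → ℂ) :
    ∫⁻ x, ‖(((t x ^ (β / 2)).toReal : ℝ) : ℂ) * f x‖ₑ ^ 2 ∂μ =
      ∫⁻ x, t x ^ β * ‖f x‖ₑ ^ 2 ∂μ := by
  refine lintegral_congr_ae (ht.mono fun x hx => ?_)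
  dsimp only
  rw [enorm_mul, mul_pow, enorm_toReal_rpow_half_sq (rpow_ne_top_of_nonneg (by linarith) hx)]

theorem memLp_toReal_rpow_half_mul_iff {t : X → ℝ≥0∞} (ht : Measurable t)
    (ht_fin : ∀ᵐ x ∂μ, t x ≠ ∞) {β : ℝ} (hβ : 0 ≤ β) {f : X → ℂ}
    (hf : AEStronglyMeasurable f μ) :
    MemLp (fun x => (((t x ^ (β / 2)).toReal : ℝ) : ℂ) * f x) 2 μ ↔
      ∫⁻ x, t x ^ β * ‖f x‖ₑ ^ 2 ∂μ < ∞ := by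
  have ht' : Measurable fun x => (((t x ^ (β / 2)).toReal : ℝ) : ℂ) := by fun_prop
  rw [memLp_two_iff_lintegral_enorm_sq_lt_top (by exact ht'.aestronglyMeasurable.mul hf),
    lintegral_enorm_toReal_rpow_half_mul_sq ht_fin hβ]

theorem exists_measurable_enorm_sq_ae_eq {F : X → ℝ≥0∞} (hF : Measurable F)
    (hF_fin : ∀ᵐ x ∂μ, F x ≠ ∞) :
    ∃ f : X → ℂ, Measurable f ∧ (fun x => ‖f x‖ₑ ^ 2) =ᵐ[μ] F := by
  refine ⟨fun x => (√(F x).toReal : ℂ), by fun_prop, hF_fin.mono fun x hx => ?_⟩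
  dsimp only
  rw [Complex.enorm_ofReal, Real.enorm_eq_ofReal (Real.sqrt_nonneg _),
    ← ENNReal.ofReal_pow (Real.sqrt_nonneg _), Real.sq_sqrt toReal_nonneg, ofReal_toReal hx]

theorem exists_subset_measure_ne_zero_setLIntegral_lt_top [SigmaFinite μ] {a : X → ℝ≥0∞}
    (ha_fin : ∀ᵐ x ∂μ, a x ≠ ∞) {S : Set X} (hS : MeasurableSet S) (hS0 : μ S ≠ 0) :
    ∃ B ⊆ S, MeasurableSet B ∧ μ B ≠ 0 ∧ ∫⁻ x in B, a x ∂μ < ∞ := by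
  have := SigmaFinite.withDensity_of_ne_top ha_fin
  obtain ⟨B, hBm, hBS, hB0, hBfin⟩ := Measure.exists_subset_measure_lt_top
    (μ := μ + μ.withDensity a) (r := 0) hS (by simp [Measure.add_apply, pos_iff_ne_zero, hS0])
  rw [Measure.add_apply, withDensity_apply _ hBm] at hBfin
  refine ⟨B, hBS, hBm, fun h => ?_, lt_of_le_of_lt le_add_self hBfin⟩
  simp [Measure.add_apply, h, withDensity_absolutelyContinuous μ a h] at hB0

theorem lintegral_mul_tsum_indicator {c : X → ℝ≥0∞} (hc : Measurable c) {B : ℕ → Set X}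
    (hB : ∀ n, MeasurableSet (B n)) (r : ℕ → ℝ≥0∞) :
    ∫⁻ x, c x * ∑' n, (B n).indicator (fun _ => r n) x ∂μ =
      ∑' n, r n * ∫⁻ x in B n, c x ∂μ := by
  simp_rw [← ENNReal.tsum_mul_left, ← Set.indicator_mul_right]
  rw [lintegral_tsum fun n => ((hc.mul_const _).indicator (hB n)).aemeasurable]
  refine tsum_congr fun n => ?_
  rw [lintegral_indicator (hB n), lintegral_mul_const _ hc, mul_comm]

theorem ae_le_const_mul_of_forall_lintegral_mul_lt_top [SigmaFinite μ] {a u : X → ℝ≥0∞}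
    (ha : Measurable a) (hu : Measurable u) (ha_fin : ∀ᵐ x ∂μ, a x ≠ ∞)
    (H : ∀ F : X → ℝ≥0∞, Measurable F → ∫⁻ x, u x * F x ∂μ < ∞ → ∫⁻ x, a x * F x ∂μ < ∞) :
    ∃ c : ℝ≥0, 0 < c ∧ ∀ᵐ x ∂μ, a x ≤ c * u x := by
  by_contra! hno
  have hS : ∀ n : ℕ, μ {x | (2 : ℝ≥0∞) ^ n * u x < a x} ≠ 0 := fun n => by
    simpa using frequently_ae_iff.1 (hno (2 ^ n) (by positivity))
  choose B hBS hBm hB0 hBfin using fun n => exists_subset_measure_ne_zero_setLIntegral_lt_top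
    (S := {x | (2 : ℝ≥0∞) ^ n * u x < a x}) ha_fin (measurableSet_lt (by fun_prop) ha) (hS n)
  set s := fun n => ∫⁻ x in B n, a x ∂μ
  have hs0 : ∀ n, s n ≠ 0 := fun n => by
    refine ((setLIntegral_pos_iff ha).2 ?_).ne'
    rw [Set.inter_eq_right.2 fun x hx => Function.mem_support.2 (ne_zero_of_lt (hBS n hx))]
    exact pos_iff_ne_zero.2 (hB0 n)
  have hu_le : ∀ n, (s n)⁻¹ * ∫⁻ x in B n, u x ∂μ ≤ 2⁻¹ ^ n := fun n => by
    have h2u : (2 : ℝ≥0∞) ^ n * ∫⁻ x in B n, u x ∂μ ≤ s n := by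
      rw [← lintegral_const_mul _ hu]
      exact setLIntegral_mono ha fun x hx => (hBS n hx).le
    rwa [ENNReal.inv_mul_le_iff (hs0 n) (hBfin n).ne, ← ENNReal.inv_pow, mul_comm,
      ← ENNReal.mul_le_iff_le_inv (by simp) (by simp)]
  set F := fun x => ∑' n, (B n).indicator (fun _ => (s n)⁻¹) x
  have hF : Measurable F := Measurable.tsum fun n => measurable_const.indicator (hBm n)
  have haF : ∫⁻ x, a x * F x ∂μ = ∞ := by
    rw [lintegral_mul_tsum_indicator ha hBm,
      tsum_congr fun n => ENNReal.inv_mul_cancel (hs0 n) (hBfin n).ne]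
    exact ENNReal.tsum_const_eq_top_of_ne_zero one_ne_zero
  refine (H F hF ?_).ne haF
  rw [lintegral_mul_tsum_indicator hu hBm]
  calc ∑' n, (s n)⁻¹ * ∫⁻ x in B n, u x ∂μ ≤ ∑' n : ℕ, (2⁻¹ : ℝ≥0∞) ^ n :=
        ENNReal.tsum_le_tsum hu_le
    _ < ∞ := by simp [ENNReal.tsum_geometric, ENNReal.one_sub_inv_two]

theorem forall_lintegral_enorm_sq_lt_top_iff [SigmaFinite μ] {a b : X → ℝ≥0∞}
    (ha : Measurable a) (hb : Measurable b) (ha_fin : ∀ᵐ x ∂μ, a x ≠ ∞) :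
    (∀ f : X → ℂ, AEStronglyMeasurable f μ → ∫⁻ x, ‖f x‖ₑ ^ 2 ∂μ < ∞ →
        ∫⁻ x, b x * ‖f x‖ₑ ^ 2 ∂μ < ∞ →
        ∫⁻ x, a x * ‖f x‖ₑ ^ 2 ∂μ < ∞) ↔
      ∃ c : ℝ≥0, 0 < c ∧ ∀ᵐ x ∂μ, a x ≤ c * (1 + b x) := by
  constructor
  · refine fun H => ae_le_const_mul_of_forall_lintegral_mul_lt_top ha (by fun_prop) ha_fin
      fun F hF hint => ?_
    simp_rw [add_mul, one_mul] at hint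
    rw [lintegral_add_left hF] at hint
    obtain ⟨hF_int, hbF_int⟩ := ENNReal.add_lt_top.1 hint
    obtain ⟨f, hf, hfF⟩ := exists_measurable_enorm_sq_ae_eq hF (ae_lt_top hF hF_int.ne |>.mono
      fun x hx => hx.ne)
    have hcongr : ∀ c : X → ℝ≥0∞, ∫⁻ x, c x * ‖f x‖ₑ ^ 2 ∂μ = ∫⁻ x, c x * F x ∂μ := fun c =>
      lintegral_congr_ae (hfF.mono fun x hx => congrArg (c x * ·) hx)
    rw [← hcongr] at hbF_int ⊢
    exact H f hf.aestronglyMeasurable (by rwa [lintegral_congr_ae hfF]) hbF_int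
  · rintro ⟨c, -, hc⟩ f hf hf_int hbf_int
    have hf2 : AEMeasurable (fun x => ‖f x‖ₑ ^ 2) μ := hf.enorm.pow_const 2
    calc ∫⁻ x, a x * ‖f x‖ₑ ^ 2 ∂μ ≤ ∫⁻ x, c * (‖f x‖ₑ ^ 2 + b x * ‖f x‖ₑ ^ 2) ∂μ :=
          lintegral_mono_ae (hc.mono fun x hx => by
            rw [← one_add_mul]; exact (mul_le_mul_left hx _).trans_eq (mul_assoc _ _ _))
      _ = c * (∫⁻ x, ‖f x‖ₑ ^ 2 ∂μ + ∫⁻ x, b x * ‖f x‖ₑ ^ 2 ∂μ) := by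
          rw [lintegral_const_mul' _ _ coe_ne_top, lintegral_add_left' hf2]
      _ < ∞ := mul_lt_top coe_lt_top (add_lt_top.2 ⟨hf_int, hbf_int⟩)

end WeightedInclusion

theorem IsCondExp.lintegral_mul_comp {φ : X → X} {ν : Measure X} {f E G : X → ℝ≥0∞}
    (hE : IsCondExp φ ν f E) (hφ : Measurable φ) (hf : Measurable f) (hG : Measurable G) :
    ∫⁻ x, f x * G (φ x) ∂ν = ∫⁻ x, E x * G (φ x) ∂ν := by
  have hEm : Measurable E := hE.1.mono (measurable_iff_comap_le.1 hφ) le_rfl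
  have hmap : (ν.withDensity f).map φ = (ν.withDensity E).map φ := by
    ext s hs
    rw [Measure.map_apply hφ hs, Measure.map_apply hφ hs, withDensity_apply _ (hφ hs),
      withDensity_apply _ (hφ hs), hE.2 s hs]
  have hGφ : Measurable fun x => G (φ x) := hG.comp hφ
  calc ∫⁻ x, f x * G (φ x) ∂ν = ∫⁻ y, G y ∂(ν.withDensity f).map φ := by
        rw [lintegral_map hG hφ, lintegral_withDensity_eq_lintegral_mul _ hf hGφ]; rfl
    _ = ∫⁻ x, E x * G (φ x) ∂ν := by
        rw [hmap, lintegral_map hG hφ, lintegral_withDensity_eq_lintegral_mul _ hEm hGφ]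
        rfl

section WeightedComposition

variable {μ : Measure X} {w : X → ℂ} {φ : X → X} {α : ℝ}

instance [SFinite μ] : SFinite (wcMeasure μ w) := by
  rw [wcMeasure]
  infer_instance

@[fun_prop]
theorem measurable_wcDeriv : Measurable (wcDeriv μ w φ) := Measure.measurable_rnDeriv _ _

@[fun_prop]
theorem measurable_wcAlpha (hw : Measurable w) (hφ : Measurable φ) :
    Measurable (wcAlpha μ w φ α) := by
  unfold wcAlpha
  fun_prop

@[fun_prop]
theorem measurable_wcTilde (hw : Measurable w) (hφ : Measurable φ) :
    Measurable (wcTilde μ w φ) := by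
  unfold wcTilde
  fun_prop

theorem lintegral_wcMeasure (hw : Measurable w) (F : X → ℝ≥0∞) :
    ∫⁻ x, F x ∂wcMeasure μ w = ∫⁻ x, ‖w x‖ₑ ^ 2 * F x ∂μ :=
  lintegral_withDensity_eq_lintegral_mul_non_measurable _ (by fun_prop) (by simp) F

theorem ae_wcMeasure_iff (hw : Measurable w) {p : X → Prop} :
    (∀ᵐ x ∂wcMeasure μ w, p x) ↔ ∀ᵐ x ∂μ, w x ≠ 0 → p x := by
  rw [wcMeasure, ae_withDensity_iff (by fun_prop)]
  simp

theorem map_wcMeasure_eq [SigmaFinite μ] (habs : (wcMeasure μ w).map φ ≪ μ) :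
    (wcMeasure μ w).map φ = μ.withDensity (wcDeriv μ w φ) := by
  exact (Measure.withDensity_rnDeriv_eq _ _ habs).symm

theorem lintegral_comp_wcMeasure [SigmaFinite μ] (hφ : Measurable φ)
    (habs : (wcMeasure μ w).map φ ≪ μ) {G : X → ℝ≥0∞} (hG : Measurable G) :
    ∫⁻ x, G (φ x) ∂wcMeasure μ w = ∫⁻ x, wcDeriv μ w φ x * G x ∂μ := by
  rw [← lintegral_map hG hφ, map_wcMeasure_eq habs,
    lintegral_withDensity_eq_lintegral_mul _ measurable_wcDeriv hG]
  rfl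

theorem ae_comp_wcMeasure (hφ : Measurable φ) (habs : (wcMeasure μ w).map φ ≪ μ)
    {p : X → Prop} (hp : ∀ᵐ y ∂μ, p y) : ∀ᵐ x ∂wcMeasure μ w, p (φ x) :=
  ae_of_ae_map hφ.aemeasurable (habs.ae_le hp)

theorem ae_wcMeasure_wcDeriv_comp_ne_zero_ne_top [SigmaFinite μ] (hφ : Measurable φ)
    (habs : (wcMeasure μ w).map φ ≪ μ) (hfin : ∀ᵐ x ∂μ, wcDeriv μ w φ x < ⊤) :
    ∀ᵐ x ∂wcMeasure μ w, wcDeriv μ w φ (φ x) ≠ 0 ∧ wcDeriv μ w φ (φ x) ≠ ∞ := by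
  filter_upwards [ae_of_ae_map hφ.aemeasurable (Measure.rnDeriv_pos habs),
    ae_comp_wcMeasure hφ habs hfin] with x hpos hlt
  exact ⟨hpos.ne', hlt.ne⟩

theorem mul_comp_ae_eq_of_ae_eq (hw : Measurable w) (hφ : Measurable φ)
    (habs : (wcMeasure μ w).map φ ≪ μ) {k : X → ℂ} (hk : ∀ x, w x = 0 → k x = 0)
    {f f' : X → ℂ} (hff' : f =ᵐ[μ] f') :
    (fun x => k x * f (φ x)) =ᵐ[μ] fun x => k x * f' (φ x) := by
  filter_upwards [(ae_wcMeasure_iff hw).1 (ae_comp_wcMeasure hφ habs hff')] with x hx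
  by_cases hw0 : w x = 0
  · simp [hk x hw0]
  · rw [hx hw0]

theorem lintegral_rpow_mul_comp_wcMeasure [SigmaFinite μ] (hφ : Measurable φ)
    (habs : (wcMeasure μ w).map φ ≪ μ) {E g : X → ℝ≥0∞}
    (hE : IsCondExp φ (wcMeasure μ w) (fun x => wcDeriv μ w φ x ^ α) E)
    (hg : IsQuot φ μ (wcMeasure μ w) (wcDeriv μ w φ) E g) {G : X → ℝ≥0∞} (hG : Measurable G) :
    ∫⁻ x, wcDeriv μ w φ x ^ α * G (φ x) ∂wcMeasure μ w =
      ∫⁻ x, wcDeriv μ w φ x * (g x * G x) ∂μ := by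
  rw [hE.lintegral_mul_comp hφ (measurable_wcDeriv.pow_const α) hG,
    ← lintegral_comp_wcMeasure hφ habs (G := fun y => g y * G y) (hg.1.mul hG)]
  exact lintegral_congr_ae (hg.2.1.mono fun x hx => by dsimp only; rw [hx])

-- Also valid for `b ∈ {0, ∞}`: both sides are then `0`, by the junk values of `toReal`.
theorem toReal_div_rpow_half_eq_mul (hα : 0 < α) (a b : ℝ≥0∞) :
    ((a / b) ^ (α / 2)).toReal =
      (a ^ (α / 2)).toReal * (b ^ (-(1 / 2) : ℝ)).toReal * (b ^ ((1 - α) / 2)).toReal := by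
  simp only [← toReal_rpow, toReal_div]
  rcases (toReal_nonneg (a := b)).eq_or_lt with hb | hb
  · rw [← hb, Real.zero_rpow (by norm_num), _root_.div_zero, Real.zero_rpow (by positivity)]
    ring
  · rw [Real.div_rpow toReal_nonneg hb.le, mul_assoc, ← Real.rpow_add hb,
      show -(1 / 2) + (1 - α) / 2 = -(α / 2) by ring, Real.rpow_neg hb.le, div_eq_mul_inv]

theorem aluthgeFun_eq (hα : 0 < α) (f : X → ℂ) :
    aluthgeFun μ w φ α f = fun x => wcAlpha μ w φ α x * f (φ x) := by
  funext x
  simp only [aluthgeFun, wcTilde, wcAlpha, toReal_div_rpow_half_eq_mul hα]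
  push_cast
  ring

theorem lintegral_enorm_wcAlpha_mul_comp_sq [SigmaFinite μ] (hw : Measurable w)
    (hφ : Measurable φ) (habs : (wcMeasure μ w).map φ ≪ μ)
    (hfin : ∀ᵐ x ∂μ, wcDeriv μ w φ x < ⊤) (hα : 0 < α) {E g : X → ℝ≥0∞}
    (hE : IsCondExp φ (wcMeasure μ w) (fun x => wcDeriv μ w φ x ^ α) E)
    (hg : IsQuot φ μ (wcMeasure μ w) (wcDeriv μ w φ) E g) {f : X → ℂ} (hf : Measurable f) :
    ∫⁻ x, ‖wcAlpha μ w φ α x * f (φ x)‖ₑ ^ 2 ∂μ =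
      ∫⁻ x, g x * wcDeriv μ w φ x ^ (1 - α) * ‖f x‖ₑ ^ 2 ∂μ := by
  set h := wcDeriv μ w φ
  have hG : Measurable fun y => (h y)⁻¹ ^ α * ‖f y‖ₑ ^ 2 := by fun_prop
  calc ∫⁻ x, ‖wcAlpha μ w φ α x * f (φ x)‖ₑ ^ 2 ∂μ
      = ∫⁻ x, ‖(((h x / h (φ x)) ^ (α / 2)).toReal : ℂ)‖ₑ ^ 2 * ‖f (φ x)‖ₑ ^ 2
          ∂wcMeasure μ w := by
        rw [lintegral_wcMeasure hw]
        simp only [wcAlpha, enorm_mul, mul_pow, mul_assoc, h]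
    _ = ∫⁻ x, h x ^ α * ((h (φ x))⁻¹ ^ α * ‖f (φ x)‖ₑ ^ 2) ∂wcMeasure μ w := by
        refine lintegral_congr_ae ?_
        filter_upwards [ae_wcMeasure_wcDeriv_comp_ne_zero_ne_top hφ habs hfin,
          (withDensity_absolutelyContinuous _ _).ae_le hfin] with x ⟨h0, _⟩ hx
        rw [enorm_toReal_rpow_half_sq (rpow_ne_top_of_nonneg (by positivity) (div_ne_top hx.ne h0)),
          div_eq_mul_inv, mul_rpow_of_nonneg _ _ hα.le, mul_assoc]
    _ = ∫⁻ x, h x * (g x * ((h x)⁻¹ ^ α * ‖f x‖ₑ ^ 2)) ∂μ :=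
        lintegral_rpow_mul_comp_wcMeasure hφ habs hE hg hG
    _ = ∫⁻ x, g x * h x ^ (1 - α) * ‖f x‖ₑ ^ 2 ∂μ := by
        refine lintegral_congr_ae ?_
        filter_upwards [hfin, hg.2.2] with x hx hg0
        rcases eq_or_ne (h x) 0 with h0 | h0
        · simp [h0, hg0 h0]
        · rw [sub_eq_add_neg, ENNReal.rpow_add _ _ h0 hx.ne, ENNReal.rpow_one, ENNReal.rpow_neg,
            ← ENNReal.inv_rpow]
          ring

theorem lintegral_enorm_wcTilde_mul_comp_sq_le [SigmaFinite μ] (hw : Measurable w)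
    (hφ : Measurable φ) (habs : (wcMeasure μ w).map φ ≪ μ) {k : X → ℂ} (hk : Measurable k) :
    ∫⁻ x, ‖wcTilde μ w φ x * k (φ x)‖ₑ ^ 2 ∂μ ≤ ∫⁻ x, ‖k x‖ₑ ^ 2 ∂μ := by
  set h := wcDeriv μ w φ
  have hG : Measurable fun y => (h y)⁻¹ * ‖k y‖ₑ ^ 2 := by fun_prop
  calc ∫⁻ x, ‖wcTilde μ w φ x * k (φ x)‖ₑ ^ 2 ∂μ
      ≤ ∫⁻ x, (h (φ x))⁻¹ * ‖k (φ x)‖ₑ ^ 2 ∂wcMeasure μ w := by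
        rw [lintegral_wcMeasure hw]
        refine lintegral_mono fun x => ?_
        simp only [wcTilde, enorm_mul, mul_pow, mul_assoc, Complex.enorm_ofReal, h]
        gcongr
        calc ‖(h (φ x) ^ (-(1 / 2) : ℝ)).toReal‖ₑ ^ 2 ≤ (h (φ x) ^ (-(1 / 2) : ℝ)) ^ 2 := by
              gcongr
              exact (Real.enorm_eq_ofReal toReal_nonneg).trans_le ofReal_toReal_le
          _ = (h (φ x))⁻¹ := by
              rw [← ENNReal.rpow_natCast, ← ENNReal.rpow_mul]
              norm_num [ENNReal.rpow_neg_one]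
    _ = ∫⁻ x, h x * ((h x)⁻¹ * ‖k x‖ₑ ^ 2) ∂μ := lintegral_comp_wcMeasure hφ habs hG
    _ ≤ ∫⁻ x, ‖k x‖ₑ ^ 2 ∂μ := lintegral_mono fun x => by
        rw [← mul_assoc]
        exact mul_le_of_le_one_left' (ENNReal.mul_inv_le_one _)

theorem memLp_wcTilde_mul_comp [SigmaFinite μ] (hw : Measurable w) (hφ : Measurable φ)
    (habs : (wcMeasure μ w).map φ ≪ μ) {k : X → ℂ} (hk : MemLp k 2 μ) :
    MemLp (fun x => wcTilde μ w φ x * k (φ x)) 2 μ := by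
  have hk' := hk.aestronglyMeasurable.stronglyMeasurable_mk.measurable
  rw [memLp_congr_ae (mul_comp_ae_eq_of_ae_eq hw hφ habs (fun x hx => by simp [wcTilde, hx])
      hk.aestronglyMeasurable.ae_eq_mk), memLp_two_iff_lintegral_enorm_sq_lt_top (by fun_prop)]
  refine (lintegral_enorm_wcTilde_mul_comp_sq_le hw hφ habs hk').trans_lt ?_
  exact (memLp_two_iff_lintegral_enorm_sq_lt_top hk'.aestronglyMeasurable).1
    ((memLp_congr_ae hk.aestronglyMeasurable.ae_eq_mk).1 hk)

theorem memLp_wcAlpha_mul_comp_iff [SigmaFinite μ] (hw : Measurable w) (hφ : Measurable φ)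
    (habs : (wcMeasure μ w).map φ ≪ μ) (hfin : ∀ᵐ x ∂μ, wcDeriv μ w φ x < ⊤) (hα : 0 < α)
    {E g : X → ℝ≥0∞} (hE : IsCondExp φ (wcMeasure μ w) (fun x => wcDeriv μ w φ x ^ α) E)
    (hg : IsQuot φ μ (wcMeasure μ w) (wcDeriv μ w φ) E g) {f : X → ℂ}
    (hf : AEStronglyMeasurable f μ) :
    MemLp (fun x => wcAlpha μ w φ α x * f (φ x)) 2 μ ↔
      ∫⁻ x, g x * wcDeriv μ w φ x ^ (1 - α) * ‖f x‖ₑ ^ 2 ∂μ < ∞ := by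
  have hf' := hf.stronglyMeasurable_mk.measurable
  rw [memLp_congr_ae (mul_comp_ae_eq_of_ae_eq hw hφ habs (fun x hx => by simp [wcAlpha, hx])
      hf.ae_eq_mk), memLp_two_iff_lintegral_enorm_sq_lt_top (by fun_prop),
    lintegral_enorm_wcAlpha_mul_comp_sq hw hφ habs hfin hα hE hg hf',
    lintegral_congr_ae (hf.ae_eq_mk.mono fun x hx => by rw [← hx])]

theorem aluthgeDom_iff [SigmaFinite μ] (hw : Measurable w) (hφ : Measurable φ)
    (habs : (wcMeasure μ w).map φ ≪ μ) (hα : 0 < α) (f : X → ℂ) :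
    aluthgeDom μ w φ α f ↔ MemLp f 2 μ ∧
      MemLp (fun x => ((wcDeriv μ w φ x ^ ((1 - α) / 2)).toReal : ℂ) * f x) 2 μ ∧
      MemLp (fun x => wcAlpha μ w φ α x * f (φ x)) 2 μ := by
  rw [aluthgeDom, aluthgeFun_eq hα]
  refine ⟨fun ⟨hf, hf₁, _, hf₂⟩ => ⟨hf, hf₁, hf₂⟩, fun ⟨hf, hf₁, hf₂⟩ => ⟨hf, hf₁, ?_, hf₂⟩⟩
  simpa only [mul_assoc] using memLp_wcTilde_mul_comp hw hφ habs hf₁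

end WeightedComposition

/-- Since `Δ_α(C_{φ,w}) ⊆ C_{φ,w_α}` always holds, equality is expressed as equality of domains. -/
theorem aluthge_wco_transform_eq_iff
    (μ : Measure X) [SigmaFinite μ] (w : X → ℂ) (φ : X → X)
    (hw : Measurable w) (hφ : Measurable φ)
    (habs : (wcMeasure μ w).map φ ≪ μ)
    (hfin : ∀ᵐ x ∂μ, wcDeriv μ w φ x < ⊤)
    (α : ℝ) (hα : α ∈ Set.Ioc (0 : ℝ) 1)
    (E g : X → ℝ≥0∞)
    (hE : IsCondExp φ (wcMeasure μ w) (fun x => wcDeriv μ w φ x ^ α) E)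
    (hg : IsQuot φ μ (wcMeasure μ w) (wcDeriv μ w φ) E g) :
    (∀ f : X → ℂ, AEStronglyMeasurable f μ →
      (aluthgeDom μ w φ α f ↔
        (MemLp f 2 μ ∧ MemLp (fun x => wcAlpha μ w φ α x * f (φ x)) 2 μ))) ↔
    ∃ c : ℝ≥0, 0 < c ∧ ∀ᵐ x ∂μ,
      wcDeriv μ w φ x ^ (1 - α) ≤
        (c : ℝ≥0∞) * (1 + g x * wcDeriv μ w φ x ^ (1 - α)) := by
  have hβ : 0 ≤ 1 - α := sub_nonneg.2 hα.2
  have hh : Measurable fun x => wcDeriv μ w φ x ^ (1 - α) := measurable_wcDeriv.pow_const _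
  rw [← forall_lintegral_enorm_sq_lt_top_iff (b := fun x => g x * wcDeriv μ w φ x ^ (1 - α)) hh
    (hg.1.mul hh)
    (hfin.mono fun x hx => rpow_ne_top_of_nonneg hβ hx.ne)]
  refine forall₂_congr fun f hf => ?_
  rw [aluthgeDom_iff hw hφ habs hα.1, memLp_two_iff_lintegral_enorm_sq_lt_top hf,
    memLp_toReal_rpow_half_mul_iff measurable_wcDeriv (hfin.mono fun x hx => hx.ne) hβ hf,
    memLp_wcAlpha_mul_comp_iff hw hφ habs hfin hα.1 hE hg hf]
  tauto
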